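/- For the Korobov-kernel approximation problem, the problem is strongly polynomially tractable if and only if A_* := liminf_{k→∞} ln(g_k^{-1})/ln k > 0, and in that case the exponent of SPT is p* = max{2/A_*, 1/r_1}. -/

import Mathlib

open Filter Real Set

/-- Information complexity: the number of multi-indices `(j₁,…,j_d) ∈ ℕ^d`
(here 0-indexed, so `Λ k j` stands for `λ(k+1, j+1)`) whose eigenvalue product exceeds `ε²`. -/
noncomputable def infoCount (Λ : ℕ → ℕ → ℝ) (d : ℕ) (ε : ℝ) : ℕ :=
  Nat.card {j : Fin d → ℕ | ε ^ 2 < ∏ k : Fin d, Λ k.val (j k)}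

/-- Strong polynomial tractability. -/
def IsSPT (Λ : ℕ → ℕ → ℝ) : Prop :=
  ∃ C p : ℝ, 0 ≤ C ∧ 0 ≤ p ∧ ∀ d : ℕ, 1 ≤ d → ∀ ε : ℝ, ε ∈ Set.Ioo (0 : ℝ) 1 →
    (infoCount Λ d ε : ℝ) ≤ C * ε ^ (-p)

/-- The exponent `p*` of strong polynomial tractability. -/
noncomputable def sptExponent (Λ : ℕ → ℕ → ℝ) : ℝ :=
  sInf {p : ℝ | 0 ≤ p ∧ ∃ C : ℝ, 0 ≤ C ∧ ∀ d : ℕ, 1 ≤ d → ∀ ε : ℝ, ε ∈ Set.Ioo (0 : ℝ) 1 →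
    (infoCount Λ d ε : ℝ) ≤ C * ε ^ (-p)}

/-- Polynomial tractability. -/
def IsPT (Λ : ℕ → ℕ → ℝ) : Prop :=
  ∃ C p q : ℝ, 0 ≤ C ∧ 0 ≤ p ∧ 0 ≤ q ∧ ∀ d : ℕ, 1 ≤ d → ∀ ε : ℝ, ε ∈ Set.Ioo (0 : ℝ) 1 →
    (infoCount Λ d ε : ℝ) ≤ C * (d : ℝ) ^ q * ε ^ (-p)

/-- Quasi-polynomial tractability. -/
def IsQPT (Λ : ℕ → ℕ → ℝ) : Prop :=
  ∃ C t : ℝ, 0 < C ∧ 0 < t ∧ ∀ d : ℕ, 1 ≤ d → ∀ ε : ℝ, ε ∈ Set.Ioo (0 : ℝ) 1 →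
    (infoCount Λ d ε : ℝ) ≤ C * Real.exp (t * (1 + Real.log d) * (1 + Real.log ε⁻¹))

/-- The exponent `t*` of quasi-polynomial tractability. -/
noncomputable def qptExponent (Λ : ℕ → ℕ → ℝ) : ℝ :=
  sInf {t : ℝ | 0 < t ∧ ∃ C : ℝ, 0 < C ∧ ∀ d : ℕ, 1 ≤ d → ∀ ε : ℝ, ε ∈ Set.Ioo (0 : ℝ) 1 →
    (infoCount Λ d ε : ℝ) ≤ C * Real.exp (t * (1 + Real.log d) * (1 + Real.log ε⁻¹))}

/-- The filter describing `ε⁻¹ + d → ∞` over pairs `(ε, d)` with `ε ∈ (0,1)` and `d ≥ 1`. -/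
noncomputable def wtFilter : Filter (ℝ × ℕ) :=
  (Filter.comap (fun p : ℝ × ℕ => p.1⁻¹ + (p.2 : ℝ)) Filter.atTop) ⊓
    Filter.principal {p : ℝ × ℕ | p.1 ∈ Set.Ioo (0 : ℝ) 1 ∧ 1 ≤ p.2}

/-- `(s,t)`-weak tractability: `ln n(ε,d) / (ε^{-s} + d^t) → 0` as `ε⁻¹ + d → ∞`. -/
def IsWT (Λ : ℕ → ℕ → ℝ) (s t : ℝ) : Prop :=
  Filter.Tendsto
    (fun p : ℝ × ℕ => Real.log (infoCount Λ p.2 p.1) / (p.1 ^ (-s) + (p.2 : ℝ) ^ t))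
    wtFilter (nhds 0)

/-- Uniform weak tractability. -/
def IsUWT (Λ : ℕ → ℕ → ℝ) : Prop := ∀ s t : ℝ, 0 < s → 0 < t → IsWT Λ s t

/-- The problem suffers from the curse of dimensionality. -/
def SuffersCurse (Λ : ℕ → ℕ → ℝ) : Prop :=
  ∃ C ε₀ α : ℝ, 0 < C ∧ 0 < ε₀ ∧ 0 < α ∧ ∀ ε : ℝ, 0 < ε → ε ≤ ε₀ →
    {d : ℕ | C * (1 + α) ^ d ≤ (infoCount Λ d ε : ℝ)}.Infinite

/-- Condition (3) of Property (P) for a given `τ > 0`: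
`H(k,τ) = ∑_{j≥2} (λ(k,j)/λ(k,2))^τ` is finite for each `k` and
`sup_k H(k,τ) = H(1,τ)` (equivalently `H(k,τ) ≤ H(1,τ)` for all `k`). -/
def Cond3 (Λ : ℕ → ℕ → ℝ) (τ : ℝ) : Prop :=
  0 < τ ∧ (∀ k, Summable fun j : ℕ => (Λ k (j + 1) / Λ k 1) ^ τ) ∧
    ∀ k, (∑' j : ℕ, (Λ k (j + 1) / Λ k 1) ^ τ) ≤ ∑' j : ℕ, (Λ 0 (j + 1) / Λ 0 1) ^ τ

/-- `τ₀`: the infimum of all `τ` satisfying Condition (3). -/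
noncomputable def tau0 (Λ : ℕ → ℕ → ℝ) : ℝ := sInf {τ : ℝ | Cond3 Λ τ}

/-- Property (P): each sequence `λ(k,·)` is nonincreasing and nonnegative with `λ(k,1) = 1`
and `λ(k,2) > 0`, `h_k = λ(k,2)` is nonincreasing, and Condition (3) holds for some `τ > 0`. -/
structure PropertyP (Λ : ℕ → ℕ → ℝ) : Prop where
  nonneg : ∀ k j, 0 ≤ Λ k j
  anti : ∀ k, Antitone (Λ k)
  first : ∀ k, Λ k 0 = 1
  second_pos : ∀ k, 0 < Λ k 1
  h_anti : Antitone fun k => Λ k 1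
  cond3 : ∃ τ : ℝ, Cond3 Λ τ


/-- Eigenvalues of the Korobov-kernel problem: `λ(k,1) = 1` and
`λ(k,2j) = λ(k,2j+1) = g_k j^{-2r_k}` for `j ≥ 1`
(0-indexed in both variables: `korobovLam g r k j = λ(k+1, j+1)`). -/
noncomputable def korobovLam (g r : ℕ → ℝ) (k j : ℕ) : ℝ :=
  if j = 0 then 1 else g k * (((j + 1) / 2 : ℕ) : ℝ) ^ (-(2 * r k))


/-!
For `τ > 0`, Markov's inequality for the counting measure on `ℕ^d` gives
`n(ε,d) ≤ ε^{-2τ} ∏ₖ ∑ⱼ λ(k,j)^τ ≤ ε^{-2τ} exp(Z ∑ₖ g_k^τ)`, where `Z < ∞` as soon as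
`2 r₁ τ > 1` (then `r_k ≥ r₁` makes the bound uniform in `k`), and `∑ₖ g_k^τ < ∞` as soon as
`τ A_* > 1`. This gives SPT with every exponent `p = 2τ > max{2/A_*, 1/r₁}`.
Conversely, in dimension one there are about `ε^{-1/r₁}` indices above `ε²`, so `p ≥ 1/r₁`;
and in dimension `K + 1` all `K + 1` unit vectors count once `ε² < g_K`, which for
`g_K ≈ (K+1)^{-A_*}` forces `p ≥ 2/A_*`.
-/

section Counting

variable {β : Type*} {φ : β → ℝ} {B c : ℝ}

lemma mul_card_le_of_subset_setOf_lt (h : ∀ T : Finset β, ∑ x ∈ T, φ x ≤ B) {T : Finset β}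
    (hT : ↑T ⊆ {x | c < φ x}) : c * T.card ≤ B :=
  calc c * T.card = ∑ _x ∈ T, c := by rw [Finset.sum_const, nsmul_eq_mul, mul_comm]
    _ ≤ ∑ x ∈ T, φ x := Finset.sum_le_sum fun x hx => (hT hx).le
    _ ≤ B := h T

lemma finite_setOf_lt_of_sum_le (hc : 0 < c) (h : ∀ T : Finset β, ∑ x ∈ T, φ x ≤ B) :
    {x | c < φ x}.Finite := by
  by_contra hinf
  obtain ⟨T, hT, hcard⟩ := Set.Infinite.exists_subset_card_eq hinf (⌈B / c⌉₊ + 1)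
  have hle := mul_card_le_of_subset_setOf_lt h hT
  rw [hcard, Nat.cast_add_one, ← le_div_iff₀' hc] at hle
  linarith [Nat.le_ceil (B / c)]

lemma mul_natCard_setOf_lt_le_of_sum_le (hc : 0 < c) (h : ∀ T : Finset β, ∑ x ∈ T, φ x ≤ B) :
    c * Nat.card {x | c < φ x} ≤ B := by
  have hfin := finite_setOf_lt_of_sum_le hc h
  rw [Nat.card_eq_card_finite_toFinset hfin]
  exact mul_card_le_of_subset_setOf_lt h (by simp)

end Counting

lemma Finset.sum_prod_le_prod_tsum {ι κ : Type*} [Fintype ι] [DecidableEq ι] {F : ι → κ → ℝ}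
    (hF : ∀ k n, 0 ≤ F k n) (hs : ∀ k, Summable (F k)) (T : Finset (ι → κ)) :
    ∑ j ∈ T, ∏ k, F k (j k) ≤ ∏ k, ∑' n, F k n := by
  classical
  let box : (k : ι) → Finset κ := fun k => T.image (· k)
  have hT : T ⊆ Fintype.piFinset box := fun j hj =>
    Fintype.mem_piFinset.mpr fun k => Finset.mem_image_of_mem _ hj
  calc ∑ j ∈ T, ∏ k, F k (j k)
      ≤ ∑ j ∈ Fintype.piFinset box, ∏ k, F k (j k) :=
        Finset.sum_le_sum_of_subset_of_nonneg hT fun j _ _ => Finset.prod_nonneg fun k _ => hF k _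
    _ = ∏ k, ∑ n ∈ box k, F k n := (Finset.prod_univ_sum box F).symm
    _ ≤ ∏ k, ∑' n, F k n :=
        Finset.prod_le_prod (fun k _ => Finset.sum_nonneg fun n _ => hF k n)
          fun k _ => (hs k).sum_le_tsum _ fun n _ => hF k n

lemma one_le_of_frequently_le_mul_rpow {C β : ℝ}
    (h : ∃ᶠ n : ℕ in atTop, (n : ℝ) + 1 ≤ C * ((n : ℝ) + 1) ^ β) : 1 ≤ β := by
  by_contra! hβ
  have hgrow : Tendsto (fun n : ℕ => ((n : ℝ) + 1) ^ (1 - β)) atTop atTop :=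
    (tendsto_rpow_atTop (by linarith)).comp
      (tendsto_atTop_add_const_right _ 1 tendsto_natCast_atTop_atTop)
  obtain ⟨n, hn, hCn⟩ := (h.and_eventually (hgrow.eventually_gt_atTop C)).exists
  have hpos : (0 : ℝ) < (n : ℝ) + 1 := by positivity
  have hsplit : (n : ℝ) + 1 = ((n : ℝ) + 1) ^ β * ((n : ℝ) + 1) ^ (1 - β) := by
    rw [← Real.rpow_add hpos, add_sub_cancel, Real.rpow_one]
  have : C * ((n : ℝ) + 1) ^ β < (n : ℝ) + 1 := by
    calc C * ((n : ℝ) + 1) ^ β < ((n : ℝ) + 1) ^ (1 - β) * ((n : ℝ) + 1) ^ β :=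
          mul_lt_mul_of_pos_right hCn (Real.rpow_pos_of_pos hpos β)
      _ = (n : ℝ) + 1 := by rw [mul_comm, ← hsplit]
  linarith

lemma summable_nat_add_one_rpow_neg {s : ℝ} (hs : 1 < s) :
    Summable fun n : ℕ => ((n : ℝ) + 1) ^ (-s) := by
  have h := (summable_nat_add_iff 1).mpr (Real.summable_nat_rpow.mpr (by linarith : -s < -1))
  simpa only [Nat.cast_add_one] using h

section Eigenvalues

lemma korobovLam_zero (g r : ℕ → ℝ) (k : ℕ) : korobovLam g r k 0 = 1 := if_pos rfl

lemma korobovLam_succ (g r : ℕ → ℝ) (k j : ℕ) :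
    korobovLam g r k (j + 1) = g k * (((j + 2) / 2 : ℕ) : ℝ) ^ (-(2 * r k)) :=
  if_neg j.succ_ne_zero

lemma korobovLam_one (g r : ℕ → ℝ) (k : ℕ) : korobovLam g r k 1 = g k := by
  simp [korobovLam_succ]

variable {g r : ℕ → ℝ}

lemma one_le_cast_add_two_div_two (j : ℕ) : (1 : ℝ) ≤ (((j + 2) / 2 : ℕ) : ℝ) := by
  exact_mod_cast (by omega : 1 ≤ (j + 2) / 2)

lemma korobovLam_pos (hg : ∀ k, 0 < g k) (k j : ℕ) : 0 < korobovLam g r k j := by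
  cases j with
  | zero => simp [korobovLam_zero]
  | succ j =>
    rw [korobovLam_succ]
    exact mul_pos (hg k) (Real.rpow_pos_of_pos (by linarith [one_le_cast_add_two_div_two j]) _)

lemma min_mul_le_korobovLam {k : ℕ} (hg : 0 ≤ g k) (hr : 0 ≤ r k) (j : ℕ) :
    min 1 (g k) * ((j : ℝ) + 1) ^ (-(2 * r k)) ≤ korobovLam g r k j := by
  cases j with
  | zero => simp [korobovLam_zero]
  | succ j =>
    rw [korobovLam_succ]
    have hm : (((j + 2) / 2 : ℕ) : ℝ) ≤ ((j + 1 : ℕ) : ℝ) + 1 := by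
      push_cast; exact_mod_cast (by omega : (j + 2) / 2 ≤ j + 2)
    exact mul_le_mul (min_le_right _ _)
      (Real.rpow_le_rpow_of_nonpos (by linarith [one_le_cast_add_two_div_two j]) hm (by linarith))
      (by positivity) hg

lemma korobovLam_succ_le {k : ℕ} {s : ℝ} (hg : 0 ≤ g k) (hs : 0 ≤ s) (hsr : s ≤ r k) (j : ℕ) :
    korobovLam g r k (j + 1) ≤ g k * (((j : ℝ) + 1) / 2) ^ (-(2 * s)) := by
  rw [korobovLam_succ]
  have hm := one_le_cast_add_two_div_two j
  have hhalf : ((j : ℝ) + 1) / 2 ≤ (((j + 2) / 2 : ℕ) : ℝ) := by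
    have : ((j + 1 : ℕ) : ℝ) ≤ ((2 * ((j + 2) / 2) : ℕ) : ℝ) := by exact_mod_cast (by omega)
    push_cast at this
    linarith
  refine mul_le_mul_of_nonneg_left ?_ hg
  calc (((j + 2) / 2 : ℕ) : ℝ) ^ (-(2 * r k))
      ≤ (((j + 2) / 2 : ℕ) : ℝ) ^ (-(2 * s)) := Real.rpow_le_rpow_of_exponent_le hm (by linarith)
    _ ≤ (((j : ℝ) + 1) / 2) ^ (-(2 * s)) :=
        Real.rpow_le_rpow_of_nonpos (by positivity) hhalf (by linarith)

lemma prod_korobovLam_single {d : ℕ} (m : Fin d) :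
    ∏ k : Fin d, korobovLam g r k ((Pi.single m 1 : Fin d → ℕ) k) = g m := by
  rw [Fintype.prod_eq_single m fun k hk => by rw [Pi.single_eq_of_ne hk, korobovLam_zero],
    Pi.single_eq_same, korobovLam_one]

end Eigenvalues

section UpperBound

variable {g r : ℕ → ℝ} {τ : ℝ}

lemma summable_half_succ_rpow_neg {s : ℝ} (hs : 1 < s) :
    Summable fun j : ℕ => (((j : ℝ) + 1) / 2) ^ (-s) := by
  refine ((summable_nat_add_one_rpow_neg hs).div_const (2 ^ (-s))).congr fun j => ?_
  rw [Real.div_rpow (by positivity) zero_le_two]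

variable (hg : ∀ k, 0 < g k) (hr : Monotone r) (hτ : 0 < τ) (hs : 1 < 2 * r 0 * τ)
include hg hr hτ hs

lemma korobovLam_succ_rpow_le (k j : ℕ) :
    korobovLam g r k (j + 1) ^ τ ≤ g k ^ τ * (((j : ℝ) + 1) / 2) ^ (-(2 * r 0 * τ)) := by
  have hr0 : 0 ≤ r 0 := by
    by_contra! h
    nlinarith
  calc korobovLam g r k (j + 1) ^ τ
      ≤ (g k * (((j : ℝ) + 1) / 2) ^ (-(2 * r 0))) ^ τ :=
        Real.rpow_le_rpow (korobovLam_pos hg k _).le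
          (korobovLam_succ_le (hg k).le hr0 (hr k.zero_le) j) hτ.le
    _ = g k ^ τ * (((j : ℝ) + 1) / 2) ^ (-(2 * r 0 * τ)) := by
        rw [Real.mul_rpow (hg k).le (by positivity), ← Real.rpow_mul (by positivity), neg_mul]

lemma summable_korobovLam_rpow (k : ℕ) : Summable fun j => korobovLam g r k j ^ τ := by
  rw [← summable_nat_add_iff 1]
  exact Summable.of_nonneg_of_le (fun j => Real.rpow_nonneg (korobovLam_pos hg k _).le τ)
    (korobovLam_succ_rpow_le hg hr hτ hs k) ((summable_half_succ_rpow_neg hs).mul_left _)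

lemma tsum_korobovLam_rpow_le (k : ℕ) :
    ∑' j, korobovLam g r k j ^ τ ≤
      1 + g k ^ τ * ∑' j : ℕ, (((j : ℝ) + 1) / 2) ^ (-(2 * r 0 * τ)) := by
  rw [(summable_korobovLam_rpow hg hr hτ hs k).tsum_eq_zero_add, korobovLam_zero,
    Real.one_rpow, ← tsum_mul_left]
  exact add_le_add_right (Summable.tsum_le_tsum (korobovLam_succ_rpow_le hg hr hτ hs k)
    ((summable_nat_add_iff 1).mpr (summable_korobovLam_rpow hg hr hτ hs k))
    ((summable_half_succ_rpow_neg hs).mul_left _)) 1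

lemma korobov_finite_and_mul_infoCount_le {d : ℕ} {ε : ℝ} (hε : 0 < ε) :
    {j : Fin d → ℕ | ε ^ 2 < ∏ k : Fin d, korobovLam g r k (j k)}.Finite ∧
      (ε ^ 2) ^ τ * infoCount (korobovLam g r) d ε ≤
        ∏ k : Fin d, ∑' j, korobovLam g r k j ^ τ := by
  have hset : {j : Fin d → ℕ | ε ^ 2 < ∏ k : Fin d, korobovLam g r k (j k)} =
      {j | (ε ^ 2) ^ τ < ∏ k : Fin d, korobovLam g r k (j k) ^ τ} := by
    ext j
    rw [Set.mem_ofPred_eq, Set.mem_ofPred_eq,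
      Real.finsetProd_rpow _ _ (fun k _ => (korobovLam_pos hg _ _).le),
      Real.rpow_lt_rpow_iff (by positivity)
        (Finset.prod_nonneg fun k _ => (korobovLam_pos hg _ _).le) hτ]
  have hsum := Finset.sum_prod_le_prod_tsum (F := fun (k : Fin d) j => korobovLam g r k j ^ τ)
    (fun k j => Real.rpow_nonneg (korobovLam_pos hg (k : ℕ) j).le τ)
    (fun k => summable_korobovLam_rpow hg hr hτ hs (k : ℕ))
  have hc : 0 < (ε ^ 2) ^ τ := by positivity
  rw [infoCount, hset]
  exact ⟨finite_setOf_lt_of_sum_le hc hsum, mul_natCard_setOf_lt_le_of_sum_le hc hsum⟩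

lemma korobov_infoCount_le (hG : Summable fun k => g k ^ τ) :
    ∃ C, 0 ≤ C ∧ ∀ d : ℕ, ∀ ε : ℝ, 0 < ε →
      (infoCount (korobovLam g r) d ε : ℝ) ≤ C * ε ^ (-(2 * τ)) := by
  set Z := ∑' j : ℕ, (((j : ℝ) + 1) / 2) ^ (-(2 * r 0 * τ))
  have hZ : 0 ≤ Z := tsum_nonneg fun j => by positivity
  refine ⟨Real.exp ((∑' k, g k ^ τ) * Z), (Real.exp_pos _).le, fun d ε hε => ?_⟩
  have hprod : ∏ k : Fin d, ∑' j, korobovLam g r k j ^ τ ≤ Real.exp ((∑' k, g k ^ τ) * Z) :=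
    calc ∏ k : Fin d, ∑' j, korobovLam g r k j ^ τ
        ≤ ∏ k : Fin d, (1 + g k ^ τ * Z) :=
          Finset.prod_le_prod (fun k _ => tsum_nonneg fun j => by
            exact Real.rpow_nonneg (korobovLam_pos hg _ _).le τ)
            fun k _ => tsum_korobovLam_rpow_le hg hr hτ hs k
      _ ≤ Real.exp (∑ k : Fin d, g k ^ τ * Z) :=
          Real.prod_one_add_le_exp_sum _ fun k => mul_nonneg (Real.rpow_nonneg (hg k).le τ) hZ
      _ ≤ Real.exp ((∑' k, g k ^ τ) * Z) := by
          rw [Real.exp_le_exp, ← Finset.sum_mul, Fin.sum_univ_eq_sum_range (fun k => g k ^ τ) d]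
          gcongr
          exact hG.sum_le_tsum _ fun k _ => Real.rpow_nonneg (hg k).le τ
  have hcount := (korobov_finite_and_mul_infoCount_le hg hr hτ hs (d := d) hε).2
  have hc : 0 < (ε ^ 2) ^ τ := by positivity
  have hεpow : ε ^ (-(2 * τ)) = ((ε ^ 2) ^ τ)⁻¹ := by
    rw [← Real.rpow_natCast_mul hε.le, Nat.cast_ofNat, Real.rpow_neg hε.le]
  rw [hεpow, ← div_eq_mul_inv, le_div_iff₀ hc, mul_comm]
  exact hcount.trans hprod

end UpperBound

/-- `ln(g_k⁻¹) / ln(k+1)`, the quantity whose `liminf` is `A_*` (indices shifted by one). -/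
noncomputable def decayExponent (g : ℕ → ℝ) (k : ℕ) : ℝ :=
  Real.log (g k)⁻¹ / Real.log ((k : ℝ) + 1)

section DecayExponent

variable {g : ℕ → ℝ} {a : ℝ} {k : ℕ}

lemma log_nat_add_one_pos (hk : 1 ≤ k) : 0 < Real.log ((k : ℝ) + 1) :=
  Real.log_pos (by linarith [(Nat.one_le_cast (α := ℝ)).mpr hk])

lemma lt_decayExponent_iff (hg : 0 < g k) (hk : 1 ≤ k) :
    a < decayExponent g k ↔ g k < ((k : ℝ) + 1) ^ (-a) := by
  rw [decayExponent, lt_div_iff₀ (log_nat_add_one_pos hk), Real.log_inv,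
    ← Real.log_lt_log_iff hg (by positivity), Real.log_rpow (by positivity)]
  constructor <;> intro h <;> linarith

lemma decayExponent_lt_iff (hg : 0 < g k) (hk : 1 ≤ k) :
    decayExponent g k < a ↔ ((k : ℝ) + 1) ^ (-a) < g k := by
  rw [decayExponent, div_lt_iff₀ (log_nat_add_one_pos hk), Real.log_inv,
    ← Real.log_lt_log_iff (by positivity) hg, Real.log_rpow (by positivity)]
  constructor <;> intro h <;> linarith

lemma summable_rpow_of_eventually_lt_decayExponent (hg : ∀ k, 0 < g k) {τ : ℝ} (hτ : 0 < τ)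
    (haτ : 1 < a * τ) (hev : ∀ᶠ k in atTop, a < decayExponent g k) :
    Summable fun k => g k ^ τ := by
  refine Summable.of_norm_bounded_eventually_nat (summable_nat_add_one_rpow_neg haτ) ?_
  filter_upwards [hev, eventually_ge_atTop 1] with k hk hk1
  rw [Real.norm_of_nonneg (Real.rpow_nonneg (hg k).le τ), neg_mul_eq_neg_mul,
    Real.rpow_mul (by positivity)]
  exact Real.rpow_le_rpow (hg k).le ((lt_decayExponent_iff (hg k) hk1).mp hk).le hτ.le

end DecayExponent

lemma EReal.coe_div_lt_iff_div_toReal_lt {L : EReal} {c p : ℝ} (hL : 0 < L) (hp : 0 < p) :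
    ((c / p : ℝ) : EReal) < L ↔ c / L.toReal < p := by
  induction L using EReal.rec with
  | bot => exact absurd hL (by simp)
  | coe x => rw [EReal.coe_lt_coe_iff, EReal.toReal_coe,
      div_lt_comm₀ hp (EReal.coe_pos.mp hL)]
  | top => simp [hp]

lemma EReal.coe_div_le_iff_div_toReal_le {L : EReal} {c p : ℝ} (hL : 0 < L) (hp : 0 < p) :
    ((c / p : ℝ) : EReal) ≤ L ↔ c / L.toReal ≤ p := by
  induction L using EReal.rec with
  | bot => exact absurd hL (by simp)
  | coe x => rw [EReal.coe_le_coe_iff, EReal.toReal_coe,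
      div_le_comm₀ hp (EReal.coe_pos.mp hL)]
  | top => simp [hp.le]

def InfoCountBound (Λ : ℕ → ℕ → ℝ) (C p : ℝ) : Prop :=
  ∀ d : ℕ, 1 ≤ d → ∀ ε : ℝ, ε ∈ Set.Ioo (0 : ℝ) 1 → (infoCount Λ d ε : ℝ) ≤ C * ε ^ (-p)

lemma korobov_infoCountBound_of_two_div_lt_liminf {g r : ℕ → ℝ} (hg : ∀ k, 0 < g k)
    (hr : Monotone r) {p : ℝ} (hp : 0 < p) (hrp : 1 < r 0 * p)
    (hL : ((2 / p : ℝ) : EReal) < liminf (fun k => (decayExponent g k : EReal)) atTop) :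
    ∃ C, 0 ≤ C ∧ InfoCountBound (korobovLam g r) C p := by
  obtain ⟨a, hpa, haL⟩ := EReal.exists_between_coe_real hL
  have haτ : 1 < a * (p / 2) := by
    rw [EReal.coe_lt_coe_iff, div_lt_iff₀ hp] at hpa
    linarith
  have hG := summable_rpow_of_eventually_lt_decayExponent hg (by positivity) haτ
    ((eventually_lt_of_lt_liminf haL).mono fun k hk => EReal.coe_lt_coe_iff.mp hk)
  obtain ⟨C, hC, hbound⟩ :=
    korobov_infoCount_le hg hr (by positivity) (by linarith : 1 < 2 * r 0 * (p / 2)) hG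
  refine ⟨C, hC, fun d _ ε hε => ?_⟩
  simpa only [mul_div_cancel₀ p two_ne_zero] using hbound d ε hε.1

lemma card_le_infoCount_of_injective {Λ : ℕ → ℕ → ℝ} {d : ℕ} {ε : ℝ} {ι : Type*} [Fintype ι]
    (hfin : {j : Fin d → ℕ | ε ^ 2 < ∏ k : Fin d, Λ k (j k)}.Finite)
    (φ : ι → Fin d → ℕ) (hφ : Function.Injective φ) (hmem : ∀ i, ε ^ 2 < ∏ k : Fin d, Λ k (φ i k)) :
    Fintype.card ι ≤ infoCount Λ d ε := by
  have := hfin.to_subtype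
  rw [← Nat.card_eq_fintype_card]
  exact Nat.card_le_card_of_injective (fun i => ⟨φ i, hmem i⟩)
    fun i i' h => hφ (congrArg Subtype.val h)

/-- Here `C ε^{-p} = C c^{-p/2} (n+1)^{βp/2}` has to dominate `n + 1` infinitely often. -/
lemma one_le_mul_half_of_infoCountBound {Λ : ℕ → ℕ → ℝ} {C p c β : ℝ}
    (hb : InfoCountBound Λ C p) (hc : 0 < c)
    (h : ∃ᶠ n : ℕ in atTop, ∃ d, 1 ≤ d ∧ ∃ ε ∈ Set.Ioo (0 : ℝ) 1,
      ε ^ 2 = c * ((n : ℝ) + 1) ^ (-β) ∧ (n : ℝ) + 1 ≤ infoCount Λ d ε) :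
    1 ≤ β * p / 2 := by
  refine one_le_of_frequently_le_mul_rpow (C := C * c ^ (-(p / 2))) (h.mono ?_)
  rintro n ⟨d, hd, ε, hε, hε2, hcount⟩
  have hεp : ε ^ (-p) = c ^ (-(p / 2)) * ((n : ℝ) + 1) ^ (β * p / 2) := by
    rw [show -p = (2 : ℕ) * (-(p / 2)) by push_cast; ring, Real.rpow_natCast_mul hε.1.le, hε2,
      Real.mul_rpow hc.le (by positivity), ← Real.rpow_mul (by positivity)]
    ring_nf
  calc (n : ℝ) + 1 ≤ infoCount Λ d ε := hcount
    _ ≤ C * ε ^ (-p) := hb d hd ε hε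
    _ = C * c ^ (-(p / 2)) * ((n : ℝ) + 1) ^ (β * p / 2) := by rw [hεp, mul_assoc]

section LowerBound

variable {g r : ℕ → ℝ} {C p : ℝ}
variable (hg : ∀ k, 0 < g k) (hr : Monotone r) (hr0 : 0 < r 0)
include hg hr hr0

lemma korobov_setOf_finite {d : ℕ} {ε : ℝ} (hε : 0 < ε) :
    {j : Fin d → ℕ | ε ^ 2 < ∏ k : Fin d, korobovLam g r k (j k)}.Finite :=
  (korobov_finite_and_mul_infoCount_le hg hr (inv_pos.mpr hr0)
    (by rw [mul_assoc, mul_inv_cancel₀ hr0.ne']; norm_num) hε).1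

/-- In dimension one the indices `0, …, n` lie above `ε² = min(1, g₁)/2 · (n+1)^{-2r₁}`. -/
lemma korobov_one_le_mul_of_infoCountBound (hb : InfoCountBound (korobovLam g r) C p) :
    1 ≤ r 0 * p := by
  have hmin : 0 < min 1 (g 0) := lt_min one_pos (hg 0)
  set c := min 1 (g 0) / 2 with hc_def
  have hc : 0 < c := half_pos hmin
  suffices 1 ≤ 2 * r 0 * p / 2 by linarith
  refine one_le_mul_half_of_infoCountBound hb hc (Eventually.frequently (Eventually.of_forall
    fun n => ⟨1, le_rfl, √(c * ((n : ℝ) + 1) ^ (-(2 * r 0))), ?_⟩))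
  set x := ((n : ℝ) + 1) ^ (-(2 * r 0))
  have hx : 0 < x := by positivity
  have hx1 : x ≤ 1 := Real.rpow_le_one_of_one_le_of_nonpos (by linarith [n.cast_nonneg (α := ℝ)])
    (by linarith)
  have hε2 : √(c * x) ^ 2 = c * x := Real.sq_sqrt (by positivity)
  have hmem : ∀ i : Fin (n + 1), √(c * x) ^ 2 < ∏ k : Fin 1, korobovLam g r k i := by
    intro i
    rw [Fin.prod_univ_one, hε2]
    calc c * x < min 1 (g 0) * x := mul_lt_mul_of_pos_right (by linarith) hx
      _ ≤ min 1 (g 0) * ((i : ℝ) + 1) ^ (-(2 * r 0)) :=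
          mul_le_mul_of_nonneg_left (Real.rpow_le_rpow_of_nonpos (by positivity)
            (by exact_mod_cast i.2) (by linarith)) hmin.le
      _ ≤ korobovLam g r 0 i := min_mul_le_korobovLam (hg 0).le hr0.le i
  refine ⟨⟨Real.sqrt_pos.mpr (by positivity), ?_⟩, hε2, ?_⟩
  · rw [Real.sqrt_lt' one_pos, one_pow]
    calc c * x ≤ c := mul_le_of_le_one_right hc.le hx1
      _ < 1 := by linarith [min_le_left 1 (g 0)]
  · have := card_le_infoCount_of_injective
      (korobov_setOf_finite hg hr hr0 (Real.sqrt_pos.mpr (by positivity)))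
      (fun i : Fin (n + 1) => fun _ : Fin 1 => (i : ℕ)) (fun i i' h => Fin.ext (congrFun h 0)) hmem
    rw [Fintype.card_fin] at this
    exact_mod_cast this

/-- If `ε² = (K+1)^{-a} < g_K ≤ … ≤ g_0`, the `K + 1` unit vectors of `ℕ^{K+1}` all count. -/
lemma korobov_one_le_mul_half_of_frequently (hganti : Antitone g)
    (hb : InfoCountBound (korobovLam g r) C p) {a : ℝ} (ha : 0 < a)
    (hfreq : ∃ᶠ k in atTop, decayExponent g k < a) : 1 ≤ a * p / 2 := by
  refine one_le_mul_half_of_infoCountBound hb one_pos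
    ((hfreq.and_eventually (eventually_ge_atTop 1)).mono fun K ⟨hK, hK1⟩ => ?_)
  have hbase : (1 : ℝ) < (K : ℝ) + 1 := by linarith [(Nat.one_le_cast (α := ℝ)).mpr hK1]
  set x := ((K : ℝ) + 1) ^ (-a)
  have hx : 0 < x := by positivity
  have hε2 : √x ^ 2 = x := Real.sq_sqrt hx.le
  have hmem : ∀ m : Fin (K + 1),
      √x ^ 2 < ∏ k : Fin (K + 1), korobovLam g r k ((Pi.single m 1 : Fin (K + 1) → ℕ) k) := by
    intro m
    rw [prod_korobovLam_single, hε2]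
    exact ((decayExponent_lt_iff (hg K) hK1).mp hK).trans_le (hganti (Nat.lt_succ_iff.mp m.2))
  refine ⟨K + 1, K.succ_pos, √x, ⟨Real.sqrt_pos.mpr hx, ?_⟩, by rw [hε2, one_mul], ?_⟩
  · rw [Real.sqrt_lt' one_pos, one_pow]
    exact Real.rpow_lt_one_of_one_lt_of_neg hbase (neg_lt_zero.mpr ha)
  · have := card_le_infoCount_of_injective (korobov_setOf_finite hg hr hr0 (Real.sqrt_pos.mpr hx))
      (fun m : Fin (K + 1) => (Pi.single m 1 : Fin (K + 1) → ℕ)) (fun m m' h => by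
        by_contra hne
        simpa [Pi.single_eq_of_ne hne] using congrFun h m) hmem
    rw [Fintype.card_fin] at this
    exact_mod_cast this

end LowerBound

lemma korobov_two_div_le_liminf {g r : ℕ → ℝ} (hg : ∀ k, 0 < g k) (hganti : Antitone g)
    (hr : Monotone r) (hr0 : 0 < r 0) {C p : ℝ} (hb : InfoCountBound (korobovLam g r) C p)
    (hp : 0 < p) :
    ((2 / p : ℝ) : EReal) ≤ liminf (fun k => (decayExponent g k : EReal)) atTop := by
  by_contra! hlt
  obtain ⟨a, haL, hap⟩ := EReal.exists_between_coe_real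
    (max_lt hlt (EReal.coe_pos.mpr (by positivity)))
  have ha : 0 < a := EReal.coe_pos.mp ((le_max_right _ _).trans_lt haL)
  have hfreq : ∃ᶠ k in atTop, decayExponent g k < a :=
    (frequently_lt_of_liminf_lt (by isBoundedDefault) ((le_max_left _ _).trans_lt haL)).mono
      fun k hk => EReal.coe_lt_coe_iff.mp hk
  have h := korobov_one_le_mul_half_of_frequently hg hr hr0 hganti hb ha hfreq
  rw [EReal.coe_lt_coe_iff, lt_div_iff₀ hp] at hap
  linarith

lemma csInf_eq_of_Ioi_subset_of_subset_Ici {s : Set ℝ} {b : ℝ} (hIoi : Set.Ioi b ⊆ s)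
    (hIci : s ⊆ Set.Ici b) : sInf s = b :=
  csInf_eq_of_forall_ge_of_forall_gt_exists_lt ⟨b + 1, hIoi (lt_add_one b)⟩ hIci
    fun w hw => ⟨(b + w) / 2, hIoi (Set.mem_Ioi.mpr (by linarith)), by linarith⟩

/-- For `A_* = ⊤` the exponent reads `max (2 / 0) (1 / r 0) = 1 / r 0`, since `⊤.toReal = 0`. -/
theorem korobov_spt_general (g r : ℕ → ℝ) (hganti : Antitone g)
    (hgpos : ∀ k, 0 < g k) (hr0 : 0 < r 0) (hrmono : Monotone r) :
    (IsSPT (korobovLam g r) ↔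
      0 < Filter.liminf (fun k : ℕ => (Real.log (g k)⁻¹ / Real.log ((k : ℝ) + 1) : EReal))
        Filter.atTop) ∧
    (0 < Filter.liminf (fun k : ℕ => (Real.log (g k)⁻¹ / Real.log ((k : ℝ) + 1) : EReal))
        Filter.atTop →
      sptExponent (korobovLam g r) =
        max (2 / (Filter.liminf
          (fun k : ℕ => (Real.log (g k)⁻¹ / Real.log ((k : ℝ) + 1) : EReal))
          Filter.atTop).toReal) (1 / r 0)) := by
  simp only [← EReal.coe_div]
  set L := liminf (fun k => (decayExponent g k : EReal)) atTop
  have hlower : ∀ {C p}, InfoCountBound (korobovLam g r) C p →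
      0 < p ∧ 1 / r 0 ≤ p ∧ ((2 / p : ℝ) : EReal) ≤ L := by
    intro C p hb
    have hp : 1 / r 0 ≤ p := by
      rw [div_le_iff₀' hr0]; exact korobov_one_le_mul_of_infoCountBound hgpos hrmono hr0 hb
    have hp0 : 0 < p := (one_div_pos.mpr hr0).trans_le hp
    exact ⟨hp0, hp, korobov_two_div_le_liminf hgpos hganti hrmono hr0 hb hp0⟩
  have hupper : 0 < L → ∀ p, max (2 / L.toReal) (1 / r 0) < p →
      0 ≤ p ∧ ∃ C, 0 ≤ C ∧ InfoCountBound (korobovLam g r) C p := by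
    intro hL p hp
    rw [max_lt_iff, div_lt_iff₀' hr0] at hp
    have hp0 : 0 < p := by nlinarith
    exact ⟨hp0.le, korobov_infoCountBound_of_two_div_lt_liminf hgpos hrmono hp0 hp.2
      ((EReal.coe_div_lt_iff_div_toReal_lt hL hp0).mpr hp.1)⟩
  refine ⟨⟨fun ⟨C, p, _, _, hb⟩ => ?_, fun hL => ?_⟩, fun hL => ?_⟩
  · obtain ⟨hp0, -, hpL⟩ := hlower hb
    exact (EReal.coe_pos.mpr (div_pos two_pos hp0)).trans_le hpL
  · obtain ⟨hp, C, hC, hb⟩ := hupper hL _ (lt_add_one _)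
    exact ⟨C, _, hC, hp, hb⟩
  · refine csInf_eq_of_Ioi_subset_of_subset_Ici (fun p hp => hupper hL p hp) ?_
    rintro p ⟨-, C, -, hb⟩
    obtain ⟨hp0, hp, hpL⟩ := hlower hb
    exact max_le ((EReal.coe_div_le_iff_div_toReal_le hL hp0).mp hpL) hp

/-- Korobov kernels: SPT iff `A_* = liminf ln(g_k⁻¹)/ln k > 0`, and in that case the
exponent of SPT is `max{2/A_*, 1/r₁}` (when `A_* = ∞`, `2/A_* = 0` via
`EReal.toReal ⊤ = 0` and `2/0 = 0`). -/
theorem korobov_spt (g r : ℕ → ℝ) (hg1 : g 0 ≤ 1) (hganti : Antitone g)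
    (hgpos : ∀ k, 0 < g k) (hr0 : 0 < r 0) (hrmono : Monotone r) :
    (IsSPT (korobovLam g r) ↔
      0 < Filter.liminf (fun k : ℕ => (Real.log (g k)⁻¹ / Real.log ((k : ℝ) + 1) : EReal))
        Filter.atTop) ∧
    (0 < Filter.liminf (fun k : ℕ => (Real.log (g k)⁻¹ / Real.log ((k : ℝ) + 1) : EReal))
        Filter.atTop →
      sptExponent (korobovLam g r) =
        max (2 / (Filter.liminf
          (fun k : ℕ => (Real.log (g k)⁻¹ / Real.log ((k : ℝ) + 1) : EReal))
          Filter.atTop).toReal) (1 / r 0)) :=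
  korobov_spt_general g r hganti hgpos hr0 hrmono
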